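/- arXiv:2605.08640 — 2 statements merged into one kernel-verified Lean document; each statement's English description precedes it below -/
import Mathlib

section
/- If t ∈ (0,1) and the flow network v_t is Lipschitz with constant L_v < 1/(1−t), then the residual operator R_t = S̄_t − I satisfies Lipschitz constant ξ = (1−t)(1 + t·L_v) with (1−t) ≤ ξ < 1. -/
open MeasureTheory

/-! Both arguments of `D` see the same noise `ε`, so `D (t • x + (1 - t) • ε) - D (t • y + (1 - t) • ε)`
is `t • (x - y)` plus `(1 - t)` times an increment of `v` of norm at most `Lv * t * ‖x - y‖`.
Averaging over `ε` preserves this bound, and subtracting `x - y` leaves the remaining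
term `-(1 - t) • (x - y)`. -/

section

variable {E : Type*} [NormedAddCommGroup E] [NormedSpace ℝ E]

lemma norm_sub_sub_smul_sub_le_of_eq_add_smul {D v : E → E} {c L t : ℝ}
    (hD : ∀ x, D x = x + c • v x) (hv : ∀ x y, ‖v x - v y‖ ≤ L * ‖x - y‖)
    (hc : 0 ≤ c) (ht : 0 ≤ t) (x y e : E) :
    ‖D (t • x + e) - D (t • y + e) - t • (x - y)‖ ≤ c * (L * (t * ‖x - y‖)) := by
  have hdiff : t • x + e - (t • y + e) = t • (x - y) := by
    rw [add_sub_add_right_eq_sub, smul_sub]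
  calc ‖D (t • x + e) - D (t • y + e) - t • (x - y)‖
      = ‖c • (v (t • x + e) - v (t • y + e))‖ := by
        congr 1; rw [hD, hD]; module
    _ ≤ c * (L * (t * ‖x - y‖)) := by
        rw [norm_smul, Real.norm_of_nonneg hc]
        gcongr
        simpa only [hdiff, norm_smul, Real.norm_of_nonneg ht] using hv (t • x + e) (t • y + e)

lemma norm_integral_sub_integral_sub_le [CompleteSpace E] {α : Type*} [MeasurableSpace α] {μ : Measure α}
    [IsProbabilityMeasure μ] {F G : α → E} (hF : Integrable F μ) (hG : Integrable G μ)
    {w : E} {C : ℝ} (h : ∀ a, ‖F a - G a - w‖ ≤ C) :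
    ‖∫ a, F a ∂μ - ∫ a, G a ∂μ - w‖ ≤ C := by
  have hw : ∫ a, F a ∂μ - ∫ a, G a ∂μ - w = ∫ a, (F a - G a - w) ∂μ := by
    rw [integral_sub (f := fun a => F a - G a) (hF.sub hG) (integrable_const w), integral_sub hF hG, integral_const,
      probReal_univ, one_smul]
  simpa only [hw, probReal_univ, mul_one] using norm_integral_le_of_norm_le_const (μ := μ) (.of_forall h)

end

lemma one_sub_mul_one_add_mul_lt_one {t L : ℝ} (ht0 : 0 < t) (ht1 : t < 1)
    (hL : L < 1 / (1 - t)) : (1 - t) * (1 + t * L) < 1 := by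
  have hL' : L * (1 - t) < 1 := by rwa [lt_div_iff₀ (sub_pos.2 ht1)] at hL
  nlinarith

/-- For `t ∈ (0,1)` and flow network `v` that is `L_v`-Lipschitz with
`L_v < 1/(1-t)`, the residual operator `R = S̄ - I` is Lipschitz with constant
`ξ = (1-t)(1 + t L_v)`, and `(1-t) ≤ ξ < 1`. -/
theorem residual_operator_contraction_bound
    (m : ℕ) (t Lv : ℝ) (ht0 : 0 < t) (ht1 : t < 1) (hLv : 0 ≤ Lv)
    (hLv' : Lv < 1 / (1 - t))
    (v : EuclideanSpace ℝ (Fin m) → EuclideanSpace ℝ (Fin m))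
    (hv : ∀ x y, ‖v x - v y‖ ≤ Lv * ‖x - y‖)
    (D : EuclideanSpace ℝ (Fin m) → EuclideanSpace ℝ (Fin m))
    (hDdef : ∀ x, D x = x + (1 - t) • v x)
    (μ : Measure (EuclideanSpace ℝ (Fin m))) [IsProbabilityMeasure μ]
    (hInt : ∀ x, Integrable (fun ε => D (t • x + (1 - t) • ε)) μ)
    (Sbar R : EuclideanSpace ℝ (Fin m) → EuclideanSpace ℝ (Fin m))
    (hS : ∀ x, Sbar x = ∫ ε, D (t • x + (1 - t) • ε) ∂μ)
    (hR : ∀ x, R x = Sbar x - x)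
    (ξ : ℝ) (hξ : ξ = (1 - t) * (1 + t * Lv)) :
    (∀ x y, ‖R x - R y‖ ≤ ξ * ‖x - y‖) ∧ (1 - t) ≤ ξ ∧ ξ < 1 := by
  have hs : 0 ≤ 1 - t := sub_nonneg.2 ht1.le
  refine ⟨fun x y => ?_, ?_, hξ ▸ one_sub_mul_one_add_mul_lt_one ht0 ht1 hLv'⟩
  · have hmean := norm_integral_sub_integral_sub_le (hInt x) (hInt y)
      (norm_sub_sub_smul_sub_le_of_eq_add_smul hDdef hv hs ht0.le x y <| (1 - t) • ·)
    calc ‖R x - R y‖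
        = ‖(∫ ε, D (t • x + (1 - t) • ε) ∂μ - ∫ ε, D (t • y + (1 - t) • ε) ∂μ - t • (x - y))
            - (1 - t) • (x - y)‖ := by
          rw [hR, hR, hS, hS]; congr 1; module
      _ ≤ (1 - t) * (Lv * (t * ‖x - y‖)) + (1 - t) * ‖x - y‖ := by
          refine (norm_sub_le _ _).trans (add_le_add hmean ?_)
          rw [norm_smul, Real.norm_of_nonneg hs]
      _ = ξ * ‖x - y‖ := by rw [hξ]; ring
  · exact hξ ▸ le_mul_of_one_le_right hs (le_add_of_nonneg_right (by positivity))
end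

section
/- Let T* : R^d → R^d be averaged with λ ∈ (0,1) and nonexpansive part N, and suppose Fix(T*) ≠ ∅. Let (T_k)_k be operators and define errors e_k = T_k(w_k) − T*(w_k) along the iteration w_{k+1} = T_k(w_k). If Σ_k ‖e_k‖ < ∞, then (w_k) converges to some fixed point of T*. -/
/-!
For every fixed point `q` of the averaged map `T*`, nonexpansiveness gives
`‖w (k+1) - q‖ ≤ ‖w k - q‖ + ε k`, so each `‖w k - q‖` converges and the iterates stay bounded.
Averagedness strengthens this at a fixed point `p` to
`λ ‖T* x - p‖² + (1 - λ) ‖x - T* x‖² ≤ λ ‖x - p‖²`; as `‖T* (w k) - p‖` is squeezed between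
`‖w (k+1) - p‖ - ε k` and `‖w k - p‖`, the residual `‖w k - T* (w k)‖` tends to `0`, so every
cluster point `a` (one exists by compactness) is a fixed point. Then `‖w k - a‖` converges and
tends to `0` along a subsequence, hence `w k → a`.
-/

open Filter Topology Function

theorem MapClusterPt.eq_of_tendsto {X α : Type*} [TopologicalSpace X] [T2Space X]
    {F : Filter α} {u : α → X} {x y : X} (hx : MapClusterPt x F u) (hy : Tendsto u F (𝓝 y)) :
    x = y :=
  eq_of_nhds_neBot (hx.clusterPt.mono hy)

theorem exists_tendsto_of_le_add_of_summable {a ε : ℕ → ℝ} (ha : BddBelow (Set.range a))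
    (hε : Summable ε) (hstep : ∀ k, a (k + 1) ≤ a k + ε k) : ∃ L, Tendsto a atTop (𝓝 L) := by
  set s : ℕ → ℝ := fun n => ∑ k ∈ Finset.range n, ε k
  have hs : Tendsto s atTop (𝓝 (∑' k, ε k)) := hε.hasSum.tendsto_sum_nat
  have hanti : Antitone (a - s) := antitone_nat_of_succ_le fun k => by
    simp only [Pi.sub_apply, s, Finset.sum_range_succ]
    linarith [hstep k]
  obtain ⟨m, hm⟩ := ha
  obtain ⟨M, hM⟩ := hs.bddAbove_range
  have hbdd : BddBelow (Set.range (a - s)) := ⟨m - M, by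
    rintro _ ⟨k, rfl⟩
    exact sub_le_sub (hm ⟨k, rfl⟩) (hM ⟨k, rfl⟩)⟩
  exact ⟨_, by simpa using (tendsto_atTop_ciInf hanti hbdd).add hs⟩

section Metric

variable {X : Type*} [MetricSpace X] {w : ℕ → X} {ε : ℕ → ℝ}

theorem exists_tendsto_dist_of_dist_succ_le (hε : Summable ε) (q : X)
    (hstep : ∀ k, dist (w (k + 1)) q ≤ dist (w k) q + ε k) :
    ∃ L, Tendsto (fun k => dist (w k) q) atTop (𝓝 L) :=
  exists_tendsto_of_le_add_of_summable ⟨0, by rintro _ ⟨k, rfl⟩; exact dist_nonneg⟩ hε hstep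

theorem isFixedPt_of_mapClusterPt {T : X → X} (hT : Continuous T)
    (hres : Tendsto (fun k => dist (w k) (T (w k))) atTop (𝓝 0)) {a : X}
    (ha : MapClusterPt a atTop w) : IsFixedPt T a :=
  (dist_eq_zero.1 <| (ha.continuousAt_comp (f := fun x => dist x (T x))
    (by fun_prop)).eq_of_tendsto hres).symm

theorem exists_tendsto_of_quasiFejer [ProperSpace X] {F : Set X} (hF : F.Nonempty)
    (hε : Summable ε) (hfejer : ∀ q ∈ F, ∀ k, dist (w (k + 1)) q ≤ dist (w k) q + ε k)
    (hclust : ∀ a, MapClusterPt a atTop w → a ∈ F) : ∃ a ∈ F, Tendsto w atTop (𝓝 a) := by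
  obtain ⟨q, hq⟩ := hF
  obtain ⟨R, hR⟩ := exists_tendsto_dist_of_dist_succ_le hε q (hfejer q hq)
  obtain ⟨C, hC⟩ := hR.bddAbove_range
  obtain ⟨a, -, ha⟩ := (isCompact_closedBall q C).exists_mapClusterPt (f := atTop) (u := w)
    (tendsto_principal.2 <| .of_forall fun k => Metric.mem_closedBall.2 (hC ⟨k, rfl⟩))
  obtain ⟨L, hL⟩ := exists_tendsto_dist_of_dist_succ_le hε a (hfejer a (hclust a ha))
  have hL0 : 0 = L := by
    simpa using (ha.continuousAt_comp (f := fun x => dist x a) (by fun_prop)).eq_of_tendsto hL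
  exact ⟨a, hclust a ha, tendsto_iff_dist_tendsto_zero.2 (hL0 ▸ hL)⟩

end Metric

section Averaged

variable {E : Type*}

def averagedMap [AddCommGroup E] [Module ℝ E] (lam : ℝ) (N : E → E) (x : E) : E :=
  (1 - lam) • x + lam • N x

theorem averagedMap_sub_self [AddCommGroup E] [Module ℝ E] (lam : ℝ) (N : E → E) (x : E) :
    averagedMap lam N x - x = lam • (N x - x) := by
  rw [averagedMap, smul_sub, sub_smul, one_smul]
  abel

theorem isFixedPt_averagedMap_iff [AddCommGroup E] [Module ℝ E] {lam : ℝ} (hlam : lam ≠ 0)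
    {N : E → E} {x : E} : IsFixedPt (averagedMap lam N) x ↔ IsFixedPt N x := by
  rw [IsFixedPt, IsFixedPt, ← sub_eq_zero, averagedMap_sub_self, smul_eq_zero, sub_eq_zero]
  simp [hlam]

variable [NormedAddCommGroup E]

theorem lipschitzWith_one_averagedMap [NormedSpace ℝ E] {lam : ℝ} {N : E → E}
    (hN : LipschitzWith 1 N) (hlam0 : 0 ≤ lam) (hlam1 : lam ≤ 1) :
    LipschitzWith 1 (averagedMap lam N) := by
  refine .mk_one fun x y => ?_
  have hNxy : ‖N x - N y‖ ≤ ‖x - y‖ := by simpa [dist_eq_norm] using hN.dist_le_mul x y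
  have hdiff : averagedMap lam N x - averagedMap lam N y
      = (1 - lam) • (x - y) + lam • (N x - N y) := by
    simp only [averagedMap, smul_sub]
    abel
  rw [dist_eq_norm, dist_eq_norm, hdiff]
  calc ‖(1 - lam) • (x - y) + lam • (N x - N y)‖
      ≤ (1 - lam) * ‖x - y‖ + lam * ‖N x - N y‖ := by
        refine (norm_add_le _ _).trans_eq ?_
        rw [norm_smul, norm_smul, Real.norm_of_nonneg (by linarith), Real.norm_of_nonneg hlam0]
    _ ≤ ‖x - y‖ := by nlinarith

variable [InnerProductSpace ℝ E]

theorem norm_one_sub_smul_add_smul_sq (t : ℝ) (x y : E) :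
    ‖(1 - t) • x + t • y‖ ^ 2 = (1 - t) * ‖x‖ ^ 2 + t * ‖y‖ ^ 2 - t * (1 - t) * ‖x - y‖ ^ 2 := by
  rw [norm_add_sq_real, norm_sub_sq_real, norm_smul, norm_smul, real_inner_smul_left,
    real_inner_smul_right, mul_pow, mul_pow, Real.norm_eq_abs, Real.norm_eq_abs, sq_abs, sq_abs]
  ring

theorem mul_dist_averagedMap_sq_add_le {lam : ℝ} {N : E → E} (hN : LipschitzWith 1 N) {p : E}
    (hp : IsFixedPt N p) (x : E) :
    lam * dist (averagedMap lam N x) p ^ 2 + (1 - lam) * dist x (averagedMap lam N x) ^ 2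
      ≤ lam * dist x p ^ 2 := by
  have hNx : ‖N x - p‖ ≤ ‖x - p‖ := by simpa [dist_eq_norm, hp.eq] using hN.dist_le_mul x p
  have hsub : averagedMap lam N x - p = (1 - lam) • (x - p) + lam • (N x - p) := by
    simp only [averagedMap, smul_sub, sub_smul, one_smul]
    abel
  have hres : x - averagedMap lam N x = lam • ((x - p) - (N x - p)) := by
    rw [← neg_sub, averagedMap_sub_self, sub_sub_sub_cancel_right, ← smul_neg, neg_sub]
  rw [dist_eq_norm, dist_eq_norm, dist_eq_norm, hsub, hres, norm_one_sub_smul_add_smul_sq,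
    norm_smul, mul_pow, Real.norm_eq_abs, sq_abs]
  have : lam ^ 2 * ‖N x - p‖ ^ 2 ≤ lam ^ 2 * ‖x - p‖ ^ 2 := by gcongr
  linarith

theorem tendsto_dist_averagedMap_zero {lam : ℝ} (hlam0 : 0 < lam) (hlam1 : lam < 1) {N : E → E}
    (hN : LipschitzWith 1 N) {p : E} (hp : IsFixedPt N p) {w : ℕ → E} {ε : ℕ → ℝ}
    (hε : Tendsto ε atTop (𝓝 0)) (hw : ∀ k, dist (w (k + 1)) (averagedMap lam N (w k)) ≤ ε k)
    {L : ℝ} (hL : Tendsto (fun k => dist (w k) p) atTop (𝓝 L)) :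
    Tendsto (fun k => dist (w k) (averagedMap lam N (w k))) atTop (𝓝 0) := by
  have hT := lipschitzWith_one_averagedMap hN hlam0.le hlam1.le
  have hTp := (isFixedPt_averagedMap_iff hlam0.ne').2 hp
  set T := averagedMap lam N
  have hTL : Tendsto (fun k => dist (T (w k)) p) atTop (𝓝 L) := by
    refine tendsto_of_tendsto_of_tendsto_of_le_of_le
      (by simpa using ((tendsto_add_atTop_iff_nat 1).2 hL).sub hε) hL (fun k => ?_) (fun k => ?_)
    · linarith [dist_triangle (w (k + 1)) (T (w k)) p, hw k]
    · simpa [hTp.eq] using hT.dist_le_mul (w k) p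
  have hgap : Tendsto (fun k => lam / (1 - lam) * (dist (w k) p ^ 2 - dist (T (w k)) p ^ 2))
      atTop (𝓝 0) := by
    simpa using ((hL.pow 2).sub (hTL.pow 2)).const_mul (lam / (1 - lam))
  have hsq : Tendsto (fun k => dist (w k) (T (w k)) ^ 2) atTop (𝓝 0) := by
    refine squeeze_zero (fun _ => sq_nonneg _) (fun k => ?_) hgap
    rw [div_mul_eq_mul_div, le_div_iff₀ (by linarith)]
    linarith [mul_dist_averagedMap_sq_add_le (lam := lam) hN hp (w k)]
  simpa [Real.sqrt_sq dist_nonneg] using hsq.sqrt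

end Averaged

/-- Inexact Krasnosel'skii–Mann iteration: if `Tstar` is averaged with a fixed
point and the errors `e_k = T_k (w_k) - Tstar (w_k)` along the iteration
`w_{k+1} = T_k (w_k)` are summable in norm, then `(w_k)` converges to a fixed
point of `Tstar`. -/
theorem inexact_krasnoselskii_mann
    (d : ℕ) (lam : ℝ) (hlam0 : 0 < lam) (hlam1 : lam < 1)
    (N Tstar : EuclideanSpace ℝ (Fin d) → EuclideanSpace ℝ (Fin d))
    (hN : ∀ x y, ‖N x - N y‖ ≤ ‖x - y‖)
    (hTstar : ∀ x, Tstar x = (1 - lam) • x + lam • N x)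
    (hfix : ∃ p, Tstar p = p)
    (T : ℕ → EuclideanSpace ℝ (Fin d) → EuclideanSpace ℝ (Fin d))
    (w : ℕ → EuclideanSpace ℝ (Fin d))
    (hiter : ∀ k, w (k + 1) = T k (w k))
    (hsum : Summable (fun k => ‖T k (w k) - Tstar (w k)‖)) :
    ∃ xstar, Tstar xstar = xstar ∧ Tendsto w atTop (𝓝 xstar) := by
  obtain rfl : Tstar = averagedMap lam N := funext hTstar
  have hN' : LipschitzWith 1 N := .mk_one fun x y => by simpa [dist_eq_norm] using hN x y
  have hT := lipschitzWith_one_averagedMap hN' hlam0.le hlam1.le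
  have hw : ∀ k, dist (w (k + 1)) (averagedMap lam N (w k))
      = ‖T k (w k) - averagedMap lam N (w k)‖ := fun k => by rw [hiter, dist_eq_norm]
  have hfejer : ∀ q ∈ fixedPoints (averagedMap lam N), ∀ k,
      dist (w (k + 1)) q ≤ dist (w k) q + ‖T k (w k) - averagedMap lam N (w k)‖ := fun q hq k => by
    have hTq : dist (averagedMap lam N (w k)) q ≤ dist (w k) q := by
      simpa [hq.eq] using hT.dist_le_mul (w k) q
    linarith [dist_triangle (w (k + 1)) (averagedMap lam N (w k)) q, hw k]
  obtain ⟨p, hp⟩ := hfix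
  obtain ⟨L, hL⟩ := exists_tendsto_dist_of_dist_succ_le hsum p (hfejer p hp)
  have hpN : IsFixedPt N p := (isFixedPt_averagedMap_iff hlam0.ne').1 hp
  have hres := tendsto_dist_averagedMap_zero hlam0 hlam1 hN' hpN hsum.tendsto_atTop_zero
    (fun k => (hw k).le) hL
  exact exists_tendsto_of_quasiFejer ⟨p, hp⟩ hsum hfejer fun a ha =>
    isFixedPt_of_mapClusterPt hT.continuous hres ha
end
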